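/- arXiv:2011.05886 — 2 statements merged into one kernel-verified Lean document; each statement's English description precedes it below -/
import Mathlib

section
/- With respect to the symmetric bilinear form on P defined by ⟨φ_E, φ_F⟩ = δ_{E,F} t^{-inv(E)}, each operator T_i (1 ≤ i < N) is self-adjoint: ⟨T_i f, g⟩ = ⟨f, T_i g⟩ for all f, g ∈ P. -/
/-!
The form is diagonal in the basis `φ_E` with weights `w E = t⁻¹ ^ inv E`, so `T_i` is self-adjoint
as soon as its matrix satisfies `(T_i φ_E)_F · w F = (T_i φ_F)_E · w E`. Since `T_i φ_E` only
involves `φ_E` and `φ_{s_i E}`, the only nontrivial case is `F = s_i E` with `i ∈ E`, `i + 1 ∉ E`.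
There the two coefficients are `1` and `t`, and `inv E = inv (s_i E) + 1`: the swap `s_i` matches
the inversions of `s_i E` with those of `E` other than `(i, i + 1)`.
-/

open Finset

noncomputable section

/-- The space of "fermionic" polynomials: formal linear combinations of
monomials `φ_E = θ_{i₁}⋯θ_{i_m}` indexed by finite sets `E` of indices. -/
abbrev SP (K : Type) [Field K] := Finset ℕ →₀ K

variable {K : Type} [Field K]

/-- basis monomial φ_E -/
def phi (K : Type) [Field K] (E : Finset ℕ) : SP K := Finsupp.single E 1

/-- linear operator determined by its values on the basis {φ_E} -/
def opOf (v : Finset ℕ → SP K) : SP K →ₗ[K] SP K :=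
  Finsupp.lsum K fun E => LinearMap.toSpanSingleton K (SP K) (v E)

/-- the image s_i E of E under the transposition swapping i, i+1 -/
def swapSet (i : ℕ) (E : Finset ℕ) : Finset ℕ := E.image (Equiv.swap i (i + 1))

/-- the Hecke algebra operator T_i acting on anti-commuting variables -/
def heckeT (t : K) (i : ℕ) : SP K →ₗ[K] SP K :=
  opOf fun E =>
    if i ∈ E then
      (if i + 1 ∈ E then -phi K E else phi K (swapSet i E))
    else
      (if i + 1 ∈ E then (t - 1) • phi K E + t • phi K (swapSet i E)
       else t • phi K E)

/-- inv(E) = #{(i,j) ∈ E × E^C : i < j}, complement taken inside {1,…,N} -/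
def invE (N : ℕ) (E : Finset ℕ) : ℕ :=
  ((E ×ˢ (Finset.Icc 1 N \ E)).filter fun p => p.1 < p.2).card

/-- the symmetric bilinear form ⟨φ_E, φ_F⟩ = δ_{E,F} t^{-inv(E)} -/
def sform (t : K) (N : ℕ) (f g : SP K) : K :=
  f.sum fun E c => c * g E * t⁻¹ ^ invE N E

section DiagForm

variable {ι R : Type*} [CommSemiring R]

def diagForm (w : ι → R) : LinearMap.BilinForm R (ι →₀ R) :=
  LinearMap.mk₂ R (fun f g => f.sum fun E c => c * g E * w E)
    (fun f f' g => Finsupp.sum_add_index' (by simp) (by intros; ring))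
    (fun c f g => by
      rw [Finsupp.sum_smul_index (by simp), smul_eq_mul, Finsupp.mul_sum]
      exact Finsupp.sum_congr fun E _ => by ring)
    (fun f g g' => by
      rw [← Finsupp.sum_add]
      exact Finsupp.sum_congr fun E _ => by rw [Finsupp.add_apply]; ring)
    (fun c f g => by
      rw [smul_eq_mul, Finsupp.mul_sum]
      exact Finsupp.sum_congr fun E _ => by rw [Finsupp.smul_apply, smul_eq_mul]; ring)

theorem diagForm_apply (w : ι → R) (f g : ι →₀ R) :
    diagForm w f g = f.sum fun E c => c * g E * w E := rfl

@[simp]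
theorem diagForm_single_left (w : ι → R) (E : ι) (g : ι →₀ R) :
    diagForm w (Finsupp.single E 1) g = g E * w E := by
  simp [diagForm_apply]

@[simp]
theorem diagForm_single_right [DecidableEq ι] (w : ι → R) (f : ι →₀ R) (F : ι) :
    diagForm w f (Finsupp.single F 1) = f F * w F := by
  rw [diagForm_apply, Finsupp.sum_eq_single F (fun E _ hE => by simp [hE])
    (fun _ => by simp)]
  simp

theorem diagForm_isAdjointPair (w : ι → R) (T : (ι →₀ R) →ₗ[R] ι →₀ R)
    (h : ∀ E F, T (Finsupp.single E 1) F * w F = T (Finsupp.single F 1) E * w E) :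
    LinearMap.IsAdjointPair (diagForm w) (diagForm w) T T := by
  classical
  rw [LinearMap.isAdjointPair_iff_comp_eq_compl₂]
  refine LinearMap.ext_basis Finsupp.basisSingleOne Finsupp.basisSingleOne fun E F => ?_
  simpa using h E F

end DiagForm

theorem mem_swapSet {i x : ℕ} {E : Finset ℕ} : x ∈ swapSet i E ↔ Equiv.swap i (i + 1) x ∈ E := by
  rw [swapSet, ← Equiv.coe_toEmbedding, ← map_eq_image, mem_map_equiv, Equiv.symm_swap]
  rfl

theorem mem_swapSet_left {i : ℕ} {E : Finset ℕ} : i ∈ swapSet i E ↔ i + 1 ∈ E := by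
  rw [mem_swapSet, Equiv.swap_apply_left]

theorem mem_swapSet_right {i : ℕ} {E : Finset ℕ} : i + 1 ∈ swapSet i E ↔ i ∈ E := by
  rw [mem_swapSet, Equiv.swap_apply_right]

@[simp]
theorem swapSet_swapSet (i : ℕ) (E : Finset ℕ) : swapSet i (swapSet i E) = E := by
  ext x; simp [mem_swapSet]

theorem swapSet_eq_self {i : ℕ} {E : Finset ℕ} (h : i ∈ E ↔ i + 1 ∈ E) : swapSet i E = E := by
  ext x
  rw [mem_swapSet, Equiv.swap_apply_def]
  split_ifs <;> subst_vars
  exacts [h.symm, h, Iff.rfl]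

theorem invE_eq_invE_swapSet_add_one {N i : ℕ} (h1 : 1 ≤ i) (h2 : i < N) {E : Finset ℕ}
    (hi : i ∈ E) (hi1 : i + 1 ∉ E) : invE N E = invE N (swapSet i E) + 1 := by
  set σ := Equiv.swap i (i + 1)
  have hpairs : ((E ×ˢ (Icc 1 N \ E)).filter fun p => p.1 < p.2).erase (i, i + 1) =
      ((swapSet i E ×ˢ (Icc 1 N \ swapSet i E)).filter fun p => p.1 < p.2).map
        (σ.prodCongr σ).toEmbedding := by
    ext ⟨a, b⟩
    simp only [mem_erase, mem_filter, mem_product, mem_sdiff, mem_map_equiv, Equiv.prodCongr_symm,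
      Equiv.prodCongr_apply, Prod.map, mem_swapSet, σ, Equiv.symm_swap, Equiv.swap_apply_self]
    by_cases hab : a ∈ E ∧ b ∉ E
    · have ha : a ≠ i + 1 := fun h => hi1 (h ▸ hab.1)
      have hb : b ≠ i := fun h => hab.2 (h ▸ hi)
      simp only [hab, true_and, and_true, not_false_eq_true, ne_eq, Prod.mk.injEq, mem_Icc,
        Equiv.swap_apply_def]
      split_ifs <;> omega
    · tauto
  have hmem : (i, i + 1) ∈ (E ×ˢ (Icc 1 N \ E)).filter fun p => p.1 < p.2 := by
    simp only [mem_filter, mem_product, mem_sdiff, mem_Icc]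
    exact ⟨⟨hi, ⟨by omega, by omega⟩, hi1⟩, by omega⟩
  rw [invE, invE, ← card_erase_add_one hmem, hpairs, card_map]

theorem heckeT_phi (t : K) (i : ℕ) (E : Finset ℕ) :
    heckeT t i (phi K E) =
      if i ∈ E then
        (if i + 1 ∈ E then -phi K E else phi K (swapSet i E))
      else
        (if i + 1 ∈ E then (t - 1) • phi K E + t • phi K (swapSet i E)
         else t • phi K E) := by
  rw [heckeT, opOf, phi, Finsupp.lsum_single, LinearMap.toSpanSingleton_apply, one_smul, ← phi]

theorem heckeT_phi_apply_of_ne {t : K} {i : ℕ} {E F : Finset ℕ} (hE : F ≠ E)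
    (hs : F ≠ swapSet i E) : heckeT t i (phi K E) F = 0 := by
  rw [heckeT_phi]
  split_ifs <;> simp [phi, hE.symm, hs.symm]

theorem heckeT_phi_apply_swapSet {t : K} {i : ℕ} {E : Finset ℕ} (hi : i ∈ E) (hi1 : i + 1 ∉ E) :
    heckeT t i (phi K E) (swapSet i E) = 1 := by
  rw [heckeT_phi, if_pos hi, if_neg hi1, phi, Finsupp.single_eq_same]

theorem heckeT_phi_swapSet_apply {t : K} {i : ℕ} {E : Finset ℕ} (hi : i ∈ E) (hi1 : i + 1 ∉ E) :
    heckeT t i (phi K (swapSet i E)) E = t := by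
  have hne : swapSet i E ≠ E := fun h => hi1 (h ▸ mem_swapSet_right.mpr hi)
  rw [heckeT_phi, if_neg (mem_swapSet_left.not.mpr hi1), if_pos (mem_swapSet_right.mpr hi),
    swapSet_swapSet]
  simp [phi, hne.symm]

theorem heckeT_phi_apply_mul_weight_swapSet {t : K} (ht : t ≠ 0) {N i : ℕ} (h1 : 1 ≤ i)
    (h2 : i < N) {E : Finset ℕ} (hi : i ∈ E) (hi1 : i + 1 ∉ E) :
    heckeT t i (phi K E) (swapSet i E) * t⁻¹ ^ invE N (swapSet i E) =
      heckeT t i (phi K (swapSet i E)) E * t⁻¹ ^ invE N E := by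
  rw [heckeT_phi_apply_swapSet hi hi1, heckeT_phi_swapSet_apply hi hi1,
    invE_eq_invE_swapSet_add_one h1 h2 hi hi1, pow_succ, mul_left_comm, mul_inv_cancel₀ ht,
    mul_one, one_mul]

theorem heckeT_phi_apply_mul_weight_comm {t : K} (ht : t ≠ 0) {N i : ℕ} (h1 : 1 ≤ i)
    (h2 : i < N) (E F : Finset ℕ) :
    heckeT t i (phi K E) F * t⁻¹ ^ invE N F = heckeT t i (phi K F) E * t⁻¹ ^ invE N E := by
  by_cases hEF : F = E
  · rw [hEF]
  by_cases hs : F = swapSet i E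
  swap
  · have hs' : E ≠ swapSet i F := fun h => hs (by rw [h, swapSet_swapSet])
    rw [heckeT_phi_apply_of_ne hEF hs, heckeT_phi_apply_of_ne (Ne.symm hEF) hs', zero_mul,
      zero_mul]
  subst hs
  by_cases hi : i ∈ E <;> by_cases hi1 : i + 1 ∈ E
  · exact absurd (swapSet_eq_self (iff_of_true hi hi1)) hEF
  · exact heckeT_phi_apply_mul_weight_swapSet ht h1 h2 hi hi1
  · have key := heckeT_phi_apply_mul_weight_swapSet (E := swapSet i E) ht h1 h2
      (mem_swapSet_left.mpr hi1) (mem_swapSet_right.not.mpr hi)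
    rw [swapSet_swapSet] at key
    exact key.symm
  · exact absurd (swapSet_eq_self (iff_of_false hi hi1)) hEF

theorem sform_eq_diagForm (t : K) (N : ℕ) (f g : SP K) :
    sform t N f g = diagForm (fun E => t⁻¹ ^ invE N E) f g := rfl

theorem heckeT_selfAdjoint_general (K : Type) [Field K] (t : K) (ht : t ≠ 0) (N i : ℕ)
    (h1 : 1 ≤ i) (h2 : i < N) (f g : SP K) :
    sform t N (heckeT t i f) g = sform t N f (heckeT t i g) := by
  rw [sform_eq_diagForm, sform_eq_diagForm]
  exact diagForm_isAdjointPair _ (heckeT t i) (heckeT_phi_apply_mul_weight_comm ht h1 h2) f g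

/-- each `T_i` (1 ≤ i < N) is self-adjoint for the form
`⟨φ_E, φ_F⟩ = δ_{E,F} t^{-inv(E)}` on P = span{φ_E : E ⊆ {1,…,N}}. -/
theorem heckeT_selfAdjoint (K : Type) [Field K] (t : K) (ht : t ≠ 0) (N i : ℕ)
    (h1 : 1 ≤ i) (h2 : i < N) (f g : SP K)
    (hf : ∀ E ∈ f.support, E ⊆ Finset.Icc 1 N)
    (hg : ∀ E ∈ g.support, E ⊆ Finset.Icc 1 N) :
    sform t N (heckeT t i f) g = sform t N f (heckeT t i g) :=
  heckeT_selfAdjoint_general K t ht N i h1 h2 f g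
end
end

section
/- The dimension of P_{m,0} = ker D ∩ P_m equals C(N-1, m), and the dimension of P_{m,1} = ker M ∩ P_m equals C(N-1, m-1). -/
open Finset

noncomputable section

variable {K : Type} [Field K]

/-- signed exterior multiplication θ̂_i -/
def thetaHat (K : Type) [Field K] (i : ℕ) : SP K →ₗ[K] SP K :=
  opOf fun E =>
    if i ∈ E then 0
    else ((-1 : K) ^ (E.filter (· < i)).card) • phi K (insert i E)

/-- formal fermionic derivative ∂_i -/
def fermD (K : Type) [Field K] (i : ℕ) : SP K →ₗ[K] SP K :=
  opOf fun E =>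
    if i ∈ E then ((-1 : K) ^ (E.filter (· < i)).card) • phi K (E.erase i)
    else 0

/-- M = Σ_{i=1}^N θ̂_i -/
def opM (K : Type) [Field K] (N : ℕ) : SP K →ₗ[K] SP K :=
  ∑ i ∈ Finset.Icc 1 N, thetaHat K i

/-- D = Σ_{i=1}^N t^{i-1} ∂_i -/
def opD (t : K) (N : ℕ) : SP K →ₗ[K] SP K :=
  ∑ i ∈ Finset.Icc 1 N, t ^ (i - 1) • fermD K i

/-- P_m = span{φ_E : E ⊆ {1,…,N}, #E = m} -/
def Pm (K : Type) [Field K] (N m : ℕ) : Submodule K (SP K) :=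
  Submodule.span K (phi K '' {E | E ⊆ Finset.Icc 1 N ∧ E.card = m})


/-!
`D` and `M` square to zero and `MD + DM = [N]_t` is a nonzero scalar, so each of them is exact
on the grading: `D` maps `P_{m+1}` onto `P_m ∩ ker D`, because `y = D (M y) / [N]_t` for
`y ∈ ker D`. Rank–nullity for `D` on `P_{m+1}` gives the Pascal recursion
`C(N, m+1) = dim P_{m,0} + dim P_{m+1,0}`, which together with `P_{0,0} = P_0` forces
`dim P_{m,0} = C(N-1, m)`. In the same way `M` maps `P_{m,0}` onto `P_{m+1,1}`, injectively because
`ker D ∩ ker M = 0`.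
-/

section AnticommutingPair

open Module LinearMap

theorem Submodule.finrank_map_add_finrank_inf_ker {F V W : Type*} [DivisionRing F]
    [AddCommGroup V] [Module F V] [AddCommGroup W] [Module F W] (f : V →ₗ[F] W)
    (P : Submodule F V) [FiniteDimensional F P] :
    finrank F (P.map f) + finrank F ↥(P ⊓ ker f) = finrank F P := by
  rw [← Submodule.map_comap_subtype, Submodule.finrank_map_subtype_eq, ← ker_domRestrict,
    ← range_domRestrict, finrank_range_add_finrank_ker]

variable {F V : Type*} [Field F] [AddCommGroup V] [Module F V] {f g : Module.End F V} {c : F}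

theorem ker_inf_ker_eq_bot_of_anticomm (hc : c ≠ 0) (hfg : f * g + g * f = c • 1) :
    ker f ⊓ ker g = ⊥ := by
  refine eq_bot_iff.2 fun x hx => ?_
  obtain ⟨hfx, hgx⟩ := Submodule.mem_inf.1 hx
  have hx := LinearMap.congr_fun hfg x
  simp only [LinearMap.add_apply, Module.End.mul_apply, LinearMap.mem_ker.1 hfx,
    LinearMap.mem_ker.1 hgx, map_zero, add_zero, LinearMap.smul_apply, Module.End.one_apply] at hx
  exact (smul_eq_zero.1 hx.symm).resolve_left hc

theorem map_eq_inf_ker_of_anticomm (hc : c ≠ 0) (hff : f * f = 0) (hfg : f * g + g * f = c • 1)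
    {P Q : Submodule F V} (hP : P ≤ Q.comap f) (hQ : Q ≤ P.comap g) :
    P.map f = Q ⊓ ker f := by
  refine le_antisymm (Submodule.map_le_iff_le_comap.2 fun x hx =>
    ⟨hP hx, by simpa using LinearMap.congr_fun hff x⟩) fun y hy => ?_
  obtain ⟨hyQ, hfy⟩ := Submodule.mem_inf.1 hy
  have hy := LinearMap.congr_fun hfg y
  simp only [LinearMap.add_apply, Module.End.mul_apply, LinearMap.mem_ker.1 hfy, map_zero,
    add_zero, LinearMap.smul_apply, Module.End.one_apply] at hy
  refine ⟨c⁻¹ • g y, P.smul_mem _ (hQ hyQ), ?_⟩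
  rw [map_smul, hy, inv_smul_smul₀ hc]

end AnticommutingPair

theorem opOf_phi (v : Finset ℕ → SP K) (E : Finset ℕ) : opOf v (phi K E) = v E := by
  simp [opOf, phi]

theorem SP.linearMap_ext {f g : SP K →ₗ[K] SP K} (h : ∀ E, f (phi K E) = g (phi K E)) :
    f = g :=
  Finsupp.lhom_ext' fun E => LinearMap.ext_ring (h E)

/-- The sign picked up when `θ_i` is moved past the variables of `E` below `i`. -/
def fermSign (K : Type) [Field K] (i : ℕ) (E : Finset ℕ) : K :=
  (-1 : K) ^ (E.filter (· < i)).card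

theorem fermSign_mul_self (i : ℕ) (E : Finset ℕ) : fermSign K i E * fermSign K i E = 1 := by
  rw [fermSign, ← pow_add, ← two_mul, pow_mul, neg_one_sq, one_pow]

theorem fermSign_insert {i j : ℕ} {E : Finset ℕ} (hj : j ∉ E) :
    fermSign K i (insert j E) = if j < i then -fermSign K i E else fermSign K i E := by
  unfold fermSign
  split_ifs with hji
  · rw [Finset.filter_insert, if_pos hji, Finset.card_insert_of_notMem (by simp [hj]), pow_succ,
      mul_neg_one]
  · rw [Finset.filter_insert, if_neg hji]

theorem fermSign_erase {i j : ℕ} {E : Finset ℕ} (hj : j ∈ E) :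
    fermSign K i (E.erase j) = if j < i then -fermSign K i E else fermSign K i E := by
  conv_rhs => rw [← Finset.insert_erase hj, fermSign_insert (Finset.notMem_erase j E)]
  split_ifs <;> simp

theorem thetaHat_phi (i : ℕ) (E : Finset ℕ) :
    thetaHat K i (phi K E) = if i ∈ E then 0 else fermSign K i E • phi K (insert i E) :=
  opOf_phi _ E

theorem fermD_phi (i : ℕ) (E : Finset ℕ) :
    fermD K i (phi K E) = if i ∈ E then fermSign K i E • phi K (E.erase i) else 0 :=
  opOf_phi _ E

theorem thetaHat_mul_self (i : ℕ) : thetaHat K i * thetaHat K i = 0 :=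
  SP.linearMap_ext fun E => by
    by_cases h : i ∈ E <;> simp [thetaHat_phi, h]

theorem fermD_mul_self (i : ℕ) : fermD K i * fermD K i = 0 :=
  SP.linearMap_ext fun E => by
    by_cases h : i ∈ E <;> simp [fermD_phi, h]

theorem thetaHat_anticomm {i j : ℕ} (hij : i ≠ j) :
    thetaHat K i * thetaHat K j + thetaHat K j * thetaHat K i = 0 :=
  SP.linearMap_ext fun E => by
    by_cases hi : i ∈ E <;> by_cases hj : j ∈ E <;>
      simp [thetaHat_phi, hi, hj, hij, hij.symm, fermSign_insert, Finset.insert_comm]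
    rcases hij.lt_or_gt with h | h <;> simp [h, h.not_gt, smul_comm (fermSign K i E)]

theorem fermD_anticomm {i j : ℕ} (hij : i ≠ j) :
    fermD K i * fermD K j + fermD K j * fermD K i = 0 :=
  SP.linearMap_ext fun E => by
    by_cases hi : i ∈ E <;> by_cases hj : j ∈ E <;>
      simp [fermD_phi, hi, hj, hij, hij.symm, fermSign_erase, Finset.erase_right_comm]
    rcases hij.lt_or_gt with h | h <;> simp [h, h.not_gt, smul_comm (fermSign K i E)]

theorem thetaHat_fermD_anticomm (i j : ℕ) :
    thetaHat K i * fermD K j + fermD K j * thetaHat K i = if i = j then 1 else 0 :=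
  SP.linearMap_ext fun E => by
    rcases eq_or_ne i j with rfl | hij
    · by_cases hi : i ∈ E <;>
        simp [thetaHat_phi, fermD_phi, hi, fermSign_insert, fermSign_erase, smul_smul,
          fermSign_mul_self]
    · by_cases hi : i ∈ E <;> by_cases hj : j ∈ E <;>
        simp [thetaHat_phi, fermD_phi, hi, hj, hij, hij.symm, fermSign_insert, fermSign_erase,
          Finset.erase_insert_of_ne hij]
      rcases hij.lt_or_gt with h | h <;> simp [h, h.not_gt, smul_comm (fermSign K i E)]

theorem Finset.sum_mul_self_eq_zero_of_anticomm {R ι : Type*} [NonUnitalNonAssocSemiring R]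
    [DecidableEq ι]
    (s : Finset ι) (a : ι → R) (hsq : ∀ i ∈ s, a i * a i = 0)
    (hanti : ∀ i ∈ s, ∀ j ∈ s, i ≠ j → a i * a j + a j * a i = 0) :
    (∑ i ∈ s, a i) * ∑ i ∈ s, a i = 0 := by
  induction s using Finset.induction_on with
  | empty => simp
  | insert k s hk ih =>
    have hcross : a k * (∑ i ∈ s, a i) + (∑ i ∈ s, a i) * a k = 0 := by
      rw [Finset.mul_sum, Finset.sum_mul, ← Finset.sum_add_distrib]
      exact Finset.sum_eq_zero fun i hi => hanti k (mem_insert_self k s) i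
        (mem_insert_of_mem hi) (ne_of_mem_of_not_mem hi hk).symm
    rw [Finset.sum_insert hk, add_mul, mul_add, mul_add, hsq k (mem_insert_self k s),
      ih (fun i hi => hsq i (mem_insert_of_mem hi))
        (fun i hi j hj => hanti i (mem_insert_of_mem hi) j (mem_insert_of_mem hj)),
      zero_add, add_zero]
    exact hcross

theorem opD_mul_self (t : K) (N : ℕ) : opD t N * opD t N = 0 := by
  rw [opD]
  apply Finset.sum_mul_self_eq_zero_of_anticomm _ fun i => t ^ (i - 1) • fermD K i
  · intro i _
    rw [smul_mul_smul_comm, fermD_mul_self, smul_zero]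
  · intro i _ j _ hij
    rw [smul_mul_smul_comm, smul_mul_smul_comm, mul_comm (t ^ (j - 1)), ← smul_add,
      fermD_anticomm hij, smul_zero]

theorem opM_mul_self (N : ℕ) : opM K N * opM K N = 0 := by
  rw [opM]
  exact Finset.sum_mul_self_eq_zero_of_anticomm _ (thetaHat K) (fun i _ => thetaHat_mul_self i)
    fun _ _ _ _ hij => thetaHat_anticomm hij

theorem opM_mul_opD_add_opD_mul_opM (t : K) (N : ℕ) :
    opM K N * opD t N + opD t N * opM K N = (∑ i ∈ Finset.range N, t ^ i) • 1 := by
  have hcoeff : ∑ i ∈ Finset.Icc 1 N, t ^ (i - 1) = ∑ i ∈ Finset.range N, t ^ i := by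
    rw [← Finset.Ico_add_one_right_eq_Icc, Finset.sum_Ico_eq_sum_range]
    simp
  rw [opM, opD, Finset.sum_mul_sum, Finset.sum_mul_sum, Finset.sum_comm (s := Finset.Icc 1 N),
    ← Finset.sum_add_distrib, ← hcoeff, Finset.sum_smul]
  refine Finset.sum_congr rfl fun i hi => ?_
  simp only [mul_smul_comm, smul_mul_assoc, ← Finset.sum_add_distrib, ← smul_add,
    thetaHat_fermD_anticomm, smul_ite, smul_zero, Finset.sum_ite_eq', if_pos hi]

theorem phi_mem_Pm {N m : ℕ} {E : Finset ℕ} (hE : E ⊆ Finset.Icc 1 N) (hcard : E.card = m) :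
    phi K E ∈ Pm K N m :=
  Submodule.subset_span ⟨E, ⟨hE, hcard⟩, rfl⟩

theorem Pm_eq_span_range (N m : ℕ) :
    Pm K N m = Submodule.span K
      (Set.range fun E : ((Finset.Icc 1 N).powersetCard m : Set (Finset ℕ)) => phi K E) := by
  rw [Pm, ← Set.image_eq_range]
  congr
  ext E
  simp [Finset.mem_powersetCard]

instance (N m : ℕ) : FiniteDimensional K (Pm K N m) := by
  rw [Pm_eq_span_range]
  exact FiniteDimensional.span_of_finite K (Set.finite_range _)

theorem finrank_Pm (N m : ℕ) : Module.finrank K (Pm K N m) = N.choose m := by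
  have hli : LinearIndependent K
      fun E : ((Finset.Icc 1 N).powersetCard m : Set (Finset ℕ)) => phi K E :=
    (Finsupp.linearIndependent_single_one K (Finset ℕ)).comp _ Subtype.val_injective
  rw [Pm_eq_span_range, finrank_span_eq_card hli]
  simp

theorem Pm_succ_le_comap_opD (t : K) (N m : ℕ) :
    Pm K N (m + 1) ≤ (Pm K N m).comap (opD t N) := by
  refine Submodule.span_le.2 ?_
  rintro _ ⟨E, ⟨hE, hcard⟩, rfl⟩
  rw [SetLike.mem_coe, Submodule.mem_comap, opD, LinearMap.sum_apply]
  refine Submodule.sum_mem _ fun i _ => Submodule.smul_mem _ _ ?_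
  rw [fermD_phi]
  split_ifs with hi
  · exact Submodule.smul_mem _ _ (phi_mem_Pm ((Finset.erase_subset i E).trans hE)
      (by rw [Finset.card_erase_of_mem hi, hcard, Nat.add_sub_cancel]))
  · exact Submodule.zero_mem _

theorem Pm_le_comap_opM (N m : ℕ) : Pm K N m ≤ (Pm K N (m + 1)).comap (opM K N) := by
  refine Submodule.span_le.2 ?_
  rintro _ ⟨E, ⟨hE, hcard⟩, rfl⟩
  rw [SetLike.mem_coe, Submodule.mem_comap, opM, LinearMap.sum_apply]
  refine Submodule.sum_mem _ fun i hi => ?_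
  rw [thetaHat_phi]
  split_ifs with hiE
  · exact Submodule.zero_mem _
  · exact Submodule.smul_mem _ _ (phi_mem_Pm (Finset.insert_subset hi hE)
      (by rw [Finset.card_insert_of_notMem hiE, hcard]))

theorem Pm_zero_le_ker_opD (t : K) (N : ℕ) : Pm K N 0 ≤ LinearMap.ker (opD t N) := by
  refine Submodule.span_le.2 ?_
  rintro _ ⟨E, ⟨-, hcard⟩, rfl⟩
  rw [Finset.card_eq_zero.1 hcard, SetLike.mem_coe, LinearMap.mem_ker, opD, LinearMap.sum_apply]
  exact Finset.sum_eq_zero fun i _ => by simp [fermD_phi]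

section Dimensions

variable {t : K} {N : ℕ}

theorem finrank_Pm_inf_ker_opD (hgen : (∑ i ∈ Finset.range N, t ^ i) ≠ 0) (m : ℕ) :
    Module.finrank K ↥(Pm K N m ⊓ LinearMap.ker (opD t N)) = (N - 1).choose m := by
  obtain ⟨n, rfl⟩ : ∃ n, N = n + 1 :=
    Nat.exists_eq_succ_of_ne_zero (by rintro rfl; exact hgen (by simp))
  induction m with
  | zero => rw [inf_eq_left.2 (Pm_zero_le_ker_opD t _), finrank_Pm, Nat.choose_zero_right,
      Nat.choose_zero_right]
  | succ k ih =>
    have hrank := Submodule.finrank_map_add_finrank_inf_ker (opD t (n + 1)) (Pm K (n + 1) (k + 1))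
    rw [map_eq_inf_ker_of_anticomm hgen (opD_mul_self t _)
      ((add_comm _ _).trans (opM_mul_opD_add_opD_mul_opM t _)) (Pm_succ_le_comap_opD t _ k)
      (Pm_le_comap_opM _ k), ih, finrank_Pm, Nat.choose_succ_succ'] at hrank
    simp only [Nat.add_sub_cancel] at hrank ⊢
    omega

theorem finrank_Pm_succ_inf_ker_opM (hgen : (∑ i ∈ Finset.range N, t ^ i) ≠ 0) (m : ℕ) :
    Module.finrank K ↥(Pm K N (m + 1) ⊓ LinearMap.ker (opM K N)) =
      Module.finrank K ↥(Pm K N m ⊓ LinearMap.ker (opD t N)) := by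
  have hrank :=
    Submodule.finrank_map_add_finrank_inf_ker (opM K N) (Pm K N m ⊓ LinearMap.ker (opD t N))
  rwa [map_eq_inf_ker_of_anticomm hgen (opM_mul_self N) (opM_mul_opD_add_opD_mul_opM t N)
    (inf_le_left.trans (Pm_le_comap_opM N m))
    (fun x hx => ⟨Pm_succ_le_comap_opD t N m hx, LinearMap.congr_fun (opD_mul_self t N) x⟩),
    inf_assoc, inf_comm (LinearMap.ker _),
    ker_inf_ker_eq_bot_of_anticomm hgen (opM_mul_opD_add_opD_mul_opM t N), inf_bot_eq,
    finrank_bot, add_zero] at hrank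

end Dimensions

theorem Pm_dims_general (K : Type) [Field K] (t : K) (N m : ℕ)
    (hm1 : 1 ≤ m)
    (hgen : (∑ i ∈ Finset.range N, t ^ i) ≠ 0) :
    Module.finrank K ↥(Pm K N m ⊓ LinearMap.ker (opD t N)) = (N - 1).choose m ∧
    Module.finrank K ↥(Pm K N m ⊓ LinearMap.ker (opM K N)) = (N - 1).choose (m - 1) := by
  obtain ⟨k, rfl⟩ : ∃ k, m = k + 1 := ⟨m - 1, by omega⟩
  exact ⟨finrank_Pm_inf_ker_opD hgen (k + 1),
    (finrank_Pm_succ_inf_ker_opM hgen k).trans (finrank_Pm_inf_ker_opD hgen k)⟩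

/-- dim P_{m,0} = C(N-1, m) and dim P_{m,1} = C(N-1, m-1). -/
theorem Pm_dims (K : Type) [Field K] (t : K) (ht : t ≠ 0) (N m : ℕ)
    (hm1 : 1 ≤ m) (hmN : m ≤ N)
    (hgen : (∑ i ∈ Finset.range N, t ^ i) ≠ 0) :
    Module.finrank K ↥(Pm K N m ⊓ LinearMap.ker (opD t N)) = (N - 1).choose m ∧
    Module.finrank K ↥(Pm K N m ⊓ LinearMap.ker (opM K N)) = (N - 1).choose (m - 1) :=
  Pm_dims_general K t N m hm1 hgen
end
end
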